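/- For every type t in the type poset T ∪ {∞}, the family U_t ∩ K(X) = {K ∈ K(X) : t(K) ≥ t} is a Gδ subset of the hyperspace K(X) for every metrizable space X. -/

import Mathlib

/-!
A compactum `K` has type at least `(n + l, n)` iff for every `k` it splits into `n + l` nonempty
clopen pieces, `n` of them with at least `k` points. Indeed, in the compact Hausdorff space `K`
distinct components are separated by clopen sets, so the pieces can be made to contain prescribed
components, and a nondegenerate component is infinite; conversely, a piece with more points than
there are components contains a nondegenerate one. Each splitting condition is Vietoris-open: the
pieces spread to disjoint open sets of `X`, and finitely many witnessing points survive small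
perturbations. The class of type at least `∞` is the intersection of those of type at least
`(m, 0)`.
-/

open Topology TopologicalSpace Set

/-- The hyperspace of compact subsets (including `∅`) of `X`. -/
def Kt (X : Type*) [TopologicalSpace X] : Type _ := {A : Set X // IsCompact A}

/-- The Vietoris topology on the hyperspace, generated by the sets
`U⁺ = {A : A ⊆ U}` and `U⁻ = {A : A ∩ U ≠ ∅}` for `U` open. -/
instance Kt.topology (X : Type*) [TopologicalSpace X] : TopologicalSpace (Kt X) :=
  TopologicalSpace.generateFrom
    ({S | ∃ U : Set X, IsOpen U ∧ S = {A : Kt X | A.1 ⊆ U}} ∪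
     {S | ∃ U : Set X, IsOpen U ∧ S = {A : Kt X | (A.1 ∩ U).Nonempty}})

/-- The Hilbert cube `[0,1]^ω`. -/
abbrev HilbertCube : Type := ℕ → unitInterval

open scoped Classical in
/-- The type of a space: the pair (number of connected components, number of
nondegenerate components) if the number of components is finite; `none` (= `∞`) otherwise. -/
noncomputable def typeOf (K : Type*) [TopologicalSpace K] : Option (ℕ × ℕ) :=
  if Finite (ConnectedComponents K) then
    some (Nat.card (ConnectedComponents K),
      Nat.card {c : ConnectedComponents K |
        ¬ ({x : K | ConnectedComponents.mk x = c} : Set K).Subsingleton})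
  else none

/-- The order on the type poset `T ∪ {∞}` (`none` plays the role of `∞`):
`(0,0)` is comparable only with itself, positive finite types are ordered by the
product order, and `∞` is above every positive finite type. -/
def tle : Option (ℕ × ℕ) → Option (ℕ × ℕ) → Prop
  | none, none => True
  | none, some _ => False
  | some p, none => 0 < p.1
  | some p, some q => (p = (0, 0) ∧ q = (0, 0)) ∨ (0 < p.1 ∧ p.1 ≤ q.1 ∧ p.2 ≤ q.2)

/-- Membership in the type poset `T ∪ {∞}`: finite types are pairs `(m, n)` with `m ≥ n`. -/
def isType : Option (ℕ × ℕ) → Prop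
  | none => True
  | some p => p.2 ≤ p.1

open Function

theorem Set.encard_le_encard_of_pairwiseDisjoint {α : Type*} {T S : Set α} {V : α → Set α}
    (hV : T.PairwiseDisjoint V) (h : ∀ x ∈ T, (S ∩ V x).Nonempty) : T.encard ≤ S.encard := by
  choose! φ hφS hφV using h
  refine encard_le_encard_of_injOn hφS fun x hx y hy hxy => hV.elim hx hy ?_
  exact not_disjoint_iff.2 ⟨φ x, hφV x hx, hxy ▸ hφV y hy⟩

theorem exists_isOpen_pairwise_disjoint_of_isCompact {X ι : Type*} [TopologicalSpace X]
    [T2Space X] [Finite ι] {P : ι → Set X} (hP : ∀ i, IsCompact (P i))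
    (hd : Pairwise (Disjoint on P)) :
    ∃ U : ι → Set X, (∀ i, IsOpen (U i)) ∧ (∀ i, P i ⊆ U i) ∧ Pairwise (Disjoint on U) := by
  have hsep : ∀ i, SeparatedNhds (P i) (⋃ j ∈ {j | j ≠ i}, P j) := fun i =>
    .of_isCompact_isCompact (hP i) ((toFinite _).isCompact_biUnion fun j _ => hP j)
      (disjoint_iUnion₂_right.2 fun _ hj => hd (Ne.symm hj))
  choose A B hA hB hPA hPB hAB using hsep
  refine ⟨fun i => A i ∩ ⋂ j ∈ {j | j ≠ i}, B j, fun i => (hA i).inter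
    ((toFinite _).isOpen_biInter fun j _ => hB j), fun i => subset_inter (hPA i) ?_, ?_⟩
  · exact subset_iInter₂ fun j hj => (subset_biUnion_of_mem (u := P) (Ne.symm hj)).trans (hPB j)
  · intro i j hij
    exact (hAB i).mono inter_subset_left (inter_subset_right.trans (biInter_subset_of_mem hij))

theorem exists_isLocallyConstant_comp_eq {Z α ι : Type*} [TopologicalSpace Z]
    [TotallySeparatedSpace Z] [Finite α] [Nonempty ι] {c : α → Z} (hc : Injective c)
    (π : α → ι) : ∃ g : Z → ι, IsLocallyConstant g ∧ g ∘ c = π := by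
  have : ∀ p : α × α, ∃ C : Set Z, IsClopen C ∧ (p.1 ≠ p.2 → c p.1 ∈ C ∧ c p.2 ∉ C) := by
    rintro ⟨a, b⟩
    by_cases hab : a = b
    · exact ⟨∅, isClopen_empty, fun h => absurd hab h⟩
    · obtain ⟨C, hC, ha, hb⟩ := exists_isClopen_of_totally_separated (hc.ne hab)
      exact ⟨C, hC, fun _ => ⟨ha, hb⟩⟩
  choose C hC hsep using this
  let Φ : Z → α × α → Bool := fun z p => (C p).boolIndicator z
  have hΦ : IsLocallyConstant Φ := (IsLocallyConstant.iff_continuous Φ).2 <|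
    continuous_pi fun p => (continuous_boolIndicator_iff_isClopen _).2 (hC p)
  have hΦc : Injective (Φ ∘ c) := by
    intro a b hab
    by_contra hne
    have := congrFun hab (a, b)
    obtain ⟨ha, hb⟩ := hsep (a, b) hne
    simp [Φ, Set.boolIndicator, ha, hb] at this
  exact ⟨extend (Φ ∘ c) π (fun _ => Classical.arbitrary ι) ∘ Φ, hΦ.comp _,
    funext fun a => hΦc.extend_apply π (fun _ => Classical.arbitrary ι) a⟩

/-- The paper's class `O_s`: a clopen decomposition of `Y` indexed by `ι` is encoded as a locally
constant map `Y → ι`, its pieces being the fibres. -/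
def HasClopenDecomp (Y : Type*) [TopologicalSpace Y] {ι : Type*} (s : ι → ℕ) : Prop :=
  ∃ f : Y → ι, IsLocallyConstant f ∧ ∀ i, (s i : ℕ∞) ≤ (f ⁻¹' {i}).encard

section Vietoris

variable {X : Type*} [TopologicalSpace X]

theorem Kt.isOpen_setOf_subset {U : Set X} (hU : IsOpen U) : IsOpen {A : Kt X | A.1 ⊆ U} :=
  .basic _ (.inl ⟨U, hU, rfl⟩)

theorem Kt.isOpen_setOf_inter_nonempty {U : Set X} (hU : IsOpen U) :
    IsOpen {A : Kt X | (A.1 ∩ U).Nonempty} :=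
  .basic _ (.inr ⟨U, hU, rfl⟩)

variable [T2Space X] {ι : Type*} [Finite ι] {s : ι → ℕ}

theorem hasClopenDecomp_iff_exists_isOpen {K : Set X} (hK : IsCompact K) :
    HasClopenDecomp K s ↔ ∃ U : ι → Set X, (∀ i, IsOpen (U i)) ∧ Pairwise (Disjoint on U) ∧
      K ⊆ ⋃ i, U i ∧ ∀ i, (s i : ℕ∞) ≤ (K ∩ U i).encard := by
  constructor
  · rintro ⟨f, hf, hs⟩
    have : CompactSpace K := isCompact_iff_compactSpace.1 hK
    obtain ⟨U, hUo, hPU, hUd⟩ := exists_isOpen_pairwise_disjoint_of_isCompact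
      (fun i => ((hf.isClopen_fiber i).isClosed.isCompact).image continuous_subtype_val)
      fun i j hij => (disjoint_image_iff Subtype.val_injective).2
        ((disjoint_singleton.2 hij).preimage f)
    refine ⟨U, hUo, hUd, fun x hx => mem_iUnion.2 ⟨f ⟨x, hx⟩, hPU _ ⟨⟨x, hx⟩, rfl, rfl⟩⟩,
      fun i => (hs i).trans ?_⟩
    rw [← Subtype.val_injective.injOn.encard_image]
    exact encard_le_encard (subset_inter (Subtype.coe_image_subset _ _) (hPU i))
  · rintro ⟨U, hUo, hUd, hcov, hs⟩
    choose f hf using fun x : K => mem_iUnion.1 (hcov x.2)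
    have hfiber : ∀ i, f ⁻¹' {i} = (↑) ⁻¹' U i := fun i => ext fun x =>
      ⟨fun h => h ▸ hf x, fun hx => hUd.eq (not_disjoint_iff.2 ⟨x, hf x, hx⟩)⟩
    refine ⟨f, IsLocallyConstant.iff_isOpen_fiber.2 fun i =>
      hfiber i ▸ (hUo i).preimage continuous_subtype_val, fun i => ?_⟩
    rw [hfiber, ← Subtype.val_injective.injOn.encard_image, Subtype.image_preimage_coe]
    exact hs i

theorem isOpen_setOf_hasClopenDecomp (s : ι → ℕ) : IsOpen {K : Kt X | HasClopenDecomp K.1 s} := by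
  rw [isOpen_iff_forall_mem_open]
  intro K hK
  obtain ⟨U, hUo, hUd, hcov, hs⟩ := (hasClopenDecomp_iff_exists_isOpen K.2).1 hK
  choose T hTsub hTcard using fun i => exists_subset_encard_eq (hs i)
  have hTfin : ∀ i, (T i).Finite := fun i => finite_of_encard_eq_coe (hTcard i)
  obtain ⟨V, hV, hVd⟩ := (finite_iUnion hTfin).t2_separation
  refine ⟨{A | A.1 ⊆ ⋃ i, U i} ∩ ⋂ i, ⋂ x ∈ T i, {A | (A.1 ∩ U i ∩ V x).Nonempty}, ?_, ?_, ?_⟩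
  · rintro A ⟨hAU, hAV⟩
    simp only [mem_iInter, mem_ofPred_eq] at hAV
    refine (hasClopenDecomp_iff_exists_isOpen A.2).2 ⟨U, hUo, hUd, hAU, fun i => ?_⟩
    rw [← hTcard i]
    exact encard_le_encard_of_pairwiseDisjoint (hVd.subset (subset_iUnion T i)) (hAV i)
  · exact (Kt.isOpen_setOf_subset (isOpen_iUnion hUo)).inter <| isOpen_iInter_of_finite fun i =>
      (hTfin i).isOpen_biInter fun x _ => by
        simpa only [inter_assoc] using Kt.isOpen_setOf_inter_nonempty ((hUo i).inter (hV x).2)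
  · refine ⟨hcov, ?_⟩
    simp only [mem_iInter, mem_ofPred_eq]
    exact fun i x hx => ⟨x, hTsub i hx, (hV x).1⟩

end Vietoris

section Components

open ConnectedComponents

variable {Y : Type*} [TopologicalSpace Y] {ι : Type*}

def nondegComponents (Y : Type*) [TopologicalSpace Y] : Set (ConnectedComponents Y) :=
  {c | ¬ ({x : Y | mk x = c} : Set Y).Subsingleton}

theorem typeOf_of_finite [Finite (ConnectedComponents Y)] :
    typeOf Y = some (Nat.card (ConnectedComponents Y), Nat.card (nondegComponents Y)) := by
  rw [typeOf, if_pos ‹_›]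
  rfl

theorem typeOf_of_not_finite (h : ¬ Finite (ConnectedComponents Y)) : typeOf Y = none := by
  rw [typeOf, if_neg h]

theorem typeOf_of_isEmpty [IsEmpty Y] : typeOf Y = some (0, 0) := by
  have : IsEmpty (ConnectedComponents Y) := surjective_coe.isEmpty
  rw [typeOf_of_finite]
  simp

theorem IsLocallyConstant.apply_eq_of_mk_eq {f : Y → ι} (hf : IsLocallyConstant f) {x y : Y}
    (h : mk x = mk y) : f x = f y :=
  hf.apply_eq_of_isPreconnected isPreconnected_connectedComponent mem_connectedComponent
    (coe_eq_coe'.1 h.symm)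

theorem infinite_of_mem_nondegComponents [T1Space Y] {c : ConnectedComponents Y}
    (hc : c ∈ nondegComponents Y) : (mk ⁻¹' {c} : Set Y).Infinite := by
  obtain ⟨x, rfl⟩ := surjective_coe c
  have hcomp : (mk ⁻¹' {mk x} : Set Y) = connectedComponent x := ext fun _ => coe_eq_coe'
  change ¬ (mk ⁻¹' {mk x} : Set Y).Subsingleton at hc
  rw [hcomp] at hc ⊢
  exact isPreconnected_connectedComponent.infinite_of_nontrivial (not_subsingleton_iff.1 hc)

variable [Finite (ConnectedComponents Y)] {f : Y → ι}

theorem natCard_le_natCard_connectedComponents (hf : IsLocallyConstant f)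
    (hne : ∀ i, (f ⁻¹' {i}).Nonempty) : Nat.card ι ≤ Nat.card (ConnectedComponents Y) := by
  choose y hy using hne
  refine Nat.card_le_card_of_injective (fun i => mk (y i)) fun i j hij => ?_
  calc i = f (y i) := (hy i).symm
    _ = f (y j) := hf.apply_eq_of_mk_eq hij
    _ = j := hy j

theorem natCard_le_natCard_nondegComponents {κ : Type*} (hf : IsLocallyConstant f) {e : κ → ι}
    (he : Injective e)
    (hbig : ∀ j, (Nat.card (ConnectedComponents Y) : ℕ∞) < (f ⁻¹' {e j}).encard) :
    Nat.card κ ≤ Nat.card (nondegComponents Y) := by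
  have : ∀ j, ∃ y, f y = e j ∧ mk y ∈ nondegComponents Y := by
    intro j
    obtain ⟨y, hy, y', -, hne, hmk⟩ :=
      exists_ne_map_eq_of_encard_lt_of_maps_to (s := f ⁻¹' {e j}) (t := univ)
        (by rw [encard_univ, ENat.card_eq_coe_natCard]; exact hbig j) (mapsTo_univ (mk : Y → _) _)
    exact ⟨y, hy, fun hsub => hne (hsub rfl hmk.symm)⟩
  choose y hy hnd using this
  refine Nat.card_le_card_of_injective (fun j => ⟨mk (y j), hnd j⟩) fun j j' hjj' => he ?_
  rw [← hy j, ← hy j']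
  exact hf.apply_eq_of_mk_eq (congrArg Subtype.val hjj')

end Components

theorem exists_injective_sumElim_mem {β : Type*} [Finite β] {A : Set β} {n l : ℕ}
    (hn : n ≤ Nat.card A) (hnl : n + l ≤ Nat.card β) :
    ∃ c : Fin n ⊕ Fin l → β, Injective c ∧ ∀ i, c (.inl i) ∈ A := by
  classical
  have := Fintype.ofFinite β
  obtain ⟨a⟩ := Function.Embedding.nonempty_of_card_le (α := Fin n) (β := A)
    (by simpa [Nat.card_eq_fintype_card] using hn)
  have ha : Injective (Subtype.val ∘ a) := Subtype.val_injective.comp a.injective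
  obtain ⟨b⟩ := Function.Embedding.nonempty_of_card_le (α := Fin l)
    (β := ↥(range (Subtype.val ∘ a))ᶜ) (by
      rw [Fintype.card_fin, Fintype.card_compl_set, card_range_of_injective ha, Fintype.card_fin]
      rw [Nat.card_eq_fintype_card] at hnl
      omega)
  exact ⟨Sum.elim (Subtype.val ∘ a) (Subtype.val ∘ b),
    ha.sumElim (Subtype.val_injective.comp b.injective) fun i j h => (b j).2 ⟨i, h⟩,
    fun i => (a i).2⟩

section Realization

open ConnectedComponents

variable {Y : Type*} [TopologicalSpace Y] [CompactSpace Y] [T2Space Y]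
  {ι : Type*} [Nonempty ι] {s : ι → ℕ}

theorem hasClopenDecomp_of_injective {α : Type*} [Finite α] {c : α → ConnectedComponents Y}
    (hc : Injective c) (π : α → ι) (hs : ∀ i, (s i : ℕ∞) ≤ (mk ⁻¹' (c '' (π ⁻¹' {i}))).encard) :
    HasClopenDecomp Y s := by
  obtain ⟨g, hg, hgc⟩ := exists_isLocallyConstant_comp_eq hc π
  refine ⟨g ∘ mk, hg.comp_continuous continuous_coe, fun i => (hs i).trans (encard_le_encard ?_)⟩
  rintro y ⟨a, ha, hay⟩
  change g (mk y) = i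
  rw [← hay, ← ha]
  exact congrFun hgc a

theorem hasClopenDecomp_of_infinite [Finite ι] [Infinite (ConnectedComponents Y)] (s : ι → ℕ) :
    HasClopenDecomp Y s := by
  obtain ⟨k, hk⟩ := Finite.exists_le s
  let c : ι × Fin k ↪ ConnectedComponents Y :=
    (Finite.equivFin _).toEmbedding.trans (Fin.valEmbedding.trans (Infinite.natEmbedding _))
  choose y hy using fun p => surjective_coe (c p)
  refine hasClopenDecomp_of_injective c.injective Prod.fst fun i => ?_
  calc (s i : ℕ∞) ≤ k := by exact_mod_cast hk i
    _ = (univ : Set (Fin k)).encard := by simp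
    _ ≤ _ := encard_le_encard_of_injOn (f := fun j => y (i, j))
        (fun j _ => show mk (y (i, j)) ∈ c '' (Prod.fst ⁻¹' {i}) from
          ⟨(i, j), rfl, (hy (i, j)).symm⟩)
        fun j _ j' _ h => congrArg Prod.snd <| c.injective <| show c (i, j) = c (i, j') by
          rw [← hy (i, j), ← hy (i, j')]
          exact congrArg mk h

theorem hasClopenDecomp_of_injective_nondeg [Finite ι] {c : ι → ConnectedComponents Y}
    (hc : Injective c) (hnd : ∀ i, 1 < s i → c i ∈ nondegComponents Y) : HasClopenDecomp Y s := by
  refine hasClopenDecomp_of_injective hc id fun i => ?_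
  rw [preimage_id, image_singleton]
  rcases le_or_gt (s i) 1 with hs | hs
  · refine le_trans (by exact_mod_cast hs) (one_le_encard_iff_nonempty.2 ?_)
    exact surjective_coe (c i)
  · rw [(infinite_of_mem_nondegComponents (hnd i hs)).encard_eq]
    exact le_top

end Realization

section TypeCharacterization

variable {Y : Type*} [TopologicalSpace Y]

/-- Weights for the type `(n + l, n)`: the `n` pieces indexed by `Fin n` must have at least `k`
points, which for large `k` forces a nondegenerate component into each of them; the other `l`
need only be nonempty. -/
abbrev typeWeight (n l k : ℕ) : Fin n ⊕ Fin l → ℕ := Sum.elim (fun _ => k) fun _ => 1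

theorem hasClopenDecomp_of_tle_typeOf [CompactSpace Y] [T2Space Y] {n l : ℕ}
    (h : tle (some (n + l, n)) (typeOf Y)) (k : ℕ) :
    HasClopenDecomp Y (typeWeight n l k) := by
  by_cases hfin : Finite (ConnectedComponents Y)
  · rw [typeOf_of_finite] at h
    rcases h with ⟨hnl, hY⟩ | ⟨hpos, hcard, hnd⟩
    · obtain ⟨rfl, rfl⟩ : n = 0 ∧ l = 0 := by simp only [Prod.mk.injEq] at hnl; omega
      have : IsEmpty (ConnectedComponents Y) :=
        Finite.card_eq_zero_iff.1 (congrArg Prod.fst hY)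
      have : IsEmpty Y := (ConnectedComponents.mk : Y → _).isEmpty
      exact ⟨isEmptyElim, .of_constant _ isEmptyElim, isEmptyElim⟩
    · have : Nonempty (Fin n ⊕ Fin l) := Fintype.card_pos_iff.1 (by simpa using hpos)
      obtain ⟨c, hc, hcnd⟩ := exists_injective_sumElim_mem hnd hcard
      exact hasClopenDecomp_of_injective_nondeg hc fun
        | .inl i, _ => hcnd i
        | .inr _, h => absurd h (lt_irrefl 1)
  · have : Infinite (ConnectedComponents Y) := not_finite_iff_infinite.1 hfin
    rw [typeOf_of_not_finite hfin] at h
    have hpos : 0 < n + l := h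
    have : Nonempty (Fin n ⊕ Fin l) := Fintype.card_pos_iff.1 (by simpa using hpos)
    exact hasClopenDecomp_of_infinite _

theorem tle_typeOf_of_hasClopenDecomp {n l : ℕ}
    (h : HasClopenDecomp Y (typeWeight n l (Nat.card (ConnectedComponents Y) + 1))) :
    tle (some (n + l, n)) (typeOf Y) := by
  obtain ⟨f, hf, hs⟩ := h
  rcases Nat.eq_zero_or_pos (n + l) with h0 | hpos
  · obtain ⟨rfl, rfl⟩ : n = 0 ∧ l = 0 := by omega
    have : IsEmpty Y := f.isEmpty
    rw [typeOf_of_isEmpty]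
    exact .inl ⟨rfl, rfl⟩
  by_cases hfin : Finite (ConnectedComponents Y)
  · rw [typeOf_of_finite]
    refine .inr ⟨hpos, ?_, ?_⟩
    · simpa using natCard_le_natCard_connectedComponents hf fun i =>
        one_le_encard_iff_nonempty.1 (le_trans (by rcases i <;> simp) (hs i))
    · simpa using natCard_le_natCard_nondegComponents hf Sum.inl_injective fun j =>
        lt_of_lt_of_le (by exact_mod_cast Nat.lt_succ_self _) (hs (.inl j))
  · rw [typeOf_of_not_finite hfin]
    exact hpos

end TypeCharacterization

theorem tle_none_iff (t : Option (ℕ × ℕ)) : tle none t ↔ ∀ m, tle (some (m + 1, 0)) t := by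
  rcases t with _ | ⟨a, b⟩
  · simp [tle]
  · simp only [tle, false_iff, not_forall]
    exact ⟨a, by simp⟩

theorem isGδ_setOf_tle_some {X : Type*} [TopologicalSpace X] [T2Space X] {m n : ℕ} (h : n ≤ m) :
    IsGδ {K : Kt X | tle (some (m, n)) (typeOf K.1)} := by
  obtain ⟨l, rfl⟩ := Nat.exists_eq_add_of_le h
  have : ∀ K : Kt X, CompactSpace K.1 := fun K => isCompact_iff_compactSpace.1 K.2
  have hset : {K : Kt X | tle (some (n + l, n)) (typeOf K.1)} =
      ⋂ k, {K : Kt X | HasClopenDecomp K.1 (typeWeight n l k)} := by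
    ext K
    simp only [mem_ofPred_eq, mem_iInter]
    exact ⟨hasClopenDecomp_of_tle_typeOf, fun h => tle_typeOf_of_hasClopenDecomp (h _)⟩
  rw [hset]
  exact .iInter fun k => (isOpen_setOf_hasClopenDecomp _).isGδ

theorem stmt14 (o : Option (ℕ × ℕ)) (ho : isType o) {X : Type*}
    [TopologicalSpace X] [MetrizableSpace X] :
    IsGδ {K : Kt X | tle o (typeOf ↥K.1)} := by
  rcases o with _ | ⟨m, n⟩
  · have hset : {K : Kt X | tle none (typeOf K.1)} =
        ⋂ m : ℕ, {K : Kt X | tle (some (m + 1, 0)) (typeOf K.1)} := by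
      ext K
      simp only [mem_ofPred_eq, mem_iInter, tle_none_iff]
    rw [hset]
    exact .iInter fun m => isGδ_setOf_tle_some (Nat.zero_le _)
  · exact isGδ_setOf_tle_some ho
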